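/- Let p ≥ 2 be an integer and set r = 2^(1/(p−1)). Then M₃^p ⊆ D̄₃(0; r, r), where D̄₃(0; r₁, r₂) = {(ζ₁,ζ₂) ∈ 𝕄(3) : ‖ζ₁ − ζ₂·i₂‖₂ ≤ r₁ and ‖ζ₁ + ζ₂·i₂‖₂ ≤ r₂} is the closed tricomplex discus. -/

import Mathlib

/-- Bicomplex multiplication on ℂ × ℂ. -/
def bcMul (z w : ℂ × ℂ) : ℂ × ℂ := (z.1 * w.1 - z.2 * w.2, z.1 * w.2 + z.2 * w.1)

/-- n-th power of a bicomplex number. -/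
def bcPow (z : ℂ × ℂ) : ℕ → ℂ × ℂ
  | 0 => (1, 0)
  | n + 1 => bcMul (bcPow z n) z

/-- The bicomplex norm ‖(z₁,z₂)‖₂ = √(|z₁|² + |z₂|²). -/
noncomputable def bcNorm (z : ℂ × ℂ) : ℝ :=
  Real.sqrt (‖z.1‖ ^ 2 + ‖z.2‖ ^ 2)

/-- The bicomplex polynomial Q_{p,c}(ζ) = ζ^p + c. -/
def bcQ (p : ℕ) (c : ℂ × ℂ) (z : ℂ × ℂ) : ℂ × ℂ := bcPow z p + c

/-- The bicomplex Multibrot set M₂^p. -/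
def M2 (p : ℕ) : Set (ℂ × ℂ) :=
  {c | ∃ M : ℝ, ∀ m : ℕ, 1 ≤ m → bcNorm ((bcQ p c)^[m] (0, 0)) ≤ M}

/-- The unit i₂ = (0,1) of 𝕄(2). -/
def i2 : ℂ × ℂ := (0, 1)

/-- Tricomplex multiplication on 𝕄(2) × 𝕄(2). -/
def tcMul (z w : (ℂ × ℂ) × (ℂ × ℂ)) : (ℂ × ℂ) × (ℂ × ℂ) :=
  (bcMul z.1 w.1 - bcMul z.2 w.2, bcMul z.1 w.2 + bcMul z.2 w.1)

/-- n-th power of a tricomplex number. -/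
def tcPow (z : (ℂ × ℂ) × (ℂ × ℂ)) : ℕ → (ℂ × ℂ) × (ℂ × ℂ)
  | 0 => ((1, 0), (0, 0))
  | n + 1 => tcMul (tcPow z n) z

/-- The tricomplex norm ‖(ζ₁,ζ₂)‖₃ = √(‖ζ₁‖₂² + ‖ζ₂‖₂²). -/
noncomputable def tcNorm (z : (ℂ × ℂ) × (ℂ × ℂ)) : ℝ :=
  Real.sqrt (bcNorm z.1 ^ 2 + bcNorm z.2 ^ 2)

/-- The tricomplex polynomial Q_{p,c}(η) = η^p + c. -/
def tcQ (p : ℕ) (c : (ℂ × ℂ) × (ℂ × ℂ)) (z : (ℂ × ℂ) × (ℂ × ℂ)) :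
    (ℂ × ℂ) × (ℂ × ℂ) := tcPow z p + c

/-- The tricomplex Multibrot set M₃^p. -/
def M3 (p : ℕ) : Set ((ℂ × ℂ) × (ℂ × ℂ)) :=
  {c | ∃ M : ℝ, ∀ m : ℕ, 1 ≤ m → tcNorm ((tcQ p c)^[m] ((0, 0), (0, 0))) ≤ M}

/-! For `s² = -1` in `ℂ` and `e² = -1` in `𝕄(2)`, the maps `z ↦ z₁ + s z₂` on `𝕄(2)` and
`η ↦ η₁ + η₂ e` on `𝕄(3)` are linear and multiplicative, so their composite `π` conjugates
`Q_{p,c}` to the complex polynomial `z ^ p + π c`. A bounded tricomplex orbit therefore gives a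
bounded complex orbit, and the classical escape estimate (if `‖c‖ ^ (p - 1) > 2` and
`‖z‖ ≥ ‖c‖`, then `‖z ^ p + c‖ ≥ (‖c‖ ^ (p - 1) - 1) ‖z‖`) yields `‖π c‖ ≤ 2 ^ (1 / (p - 1))`.
Taking `e = ±i₂` and `s = ±i`, the parallelogram law
`‖ζ‖₂² = (‖ζ₁ + i ζ₂‖² + ‖ζ₁ - i ζ₂‖²) / 2` turns these four bounds into the two discus bounds. -/

open Complex

lemma mul_norm_le_norm_pow_add {p : ℕ} (hp : 1 ≤ p) {c z : ℂ} (hcz : ‖c‖ ≤ ‖z‖) :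
    (‖c‖ ^ (p - 1) - 1) * ‖z‖ ≤ ‖z ^ p + c‖ :=
  calc (‖c‖ ^ (p - 1) - 1) * ‖z‖ = ‖c‖ ^ (p - 1) * ‖z‖ - ‖z‖ := by ring
    _ ≤ ‖z‖ ^ (p - 1) * ‖z‖ - ‖-c‖ := by rw [norm_neg]; gcongr
    _ = ‖z ^ p‖ - ‖-c‖ := by rw [norm_pow, ← pow_succ, Nat.sub_add_cancel hp]
    _ ≤ ‖z ^ p + c‖ := by simpa using norm_sub_norm_le (z ^ p) (-c)

lemma pow_mul_norm_le_norm_iterate {p : ℕ} (hp : 1 ≤ p) {c : ℂ} (hc : 2 ≤ ‖c‖ ^ (p - 1))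
    (m : ℕ) : (‖c‖ ^ (p - 1) - 1) ^ m * ‖c‖ ≤ ‖(fun z : ℂ => z ^ p + c)^[m + 1] 0‖ := by
  induction m with
  | zero => simp [zero_pow (Nat.one_le_iff_ne_zero.mp hp)]
  | succ m ih =>
    have hq : 1 ≤ ‖c‖ ^ (p - 1) - 1 := by linarith
    have hcz : ‖c‖ ≤ ‖(fun z : ℂ => z ^ p + c)^[m + 1] 0‖ :=
      (le_mul_of_one_le_left (norm_nonneg c) (one_le_pow₀ hq)).trans ih
    rw [Function.iterate_succ_apply', pow_succ', mul_assoc]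
    exact (mul_le_mul_of_nonneg_left ih (by linarith)).trans (mul_norm_le_norm_pow_add hp hcz)

lemma norm_le_of_forall_norm_iterate_le {p : ℕ} (hp : 2 ≤ p) {c : ℂ} {M : ℝ}
    (hM : ∀ m, ‖(fun z : ℂ => z ^ p + c)^[m + 1] 0‖ ≤ M) :
    ‖c‖ ≤ 2 ^ (1 / ((p : ℝ) - 1)) := by
  have hp_cast : (p : ℝ) - 1 = ((p - 1 : ℕ) : ℝ) := by
    push_cast [Nat.cast_sub (by omega : 1 ≤ p)]; ring
  have hp_pos : (0 : ℝ) < ((p - 1 : ℕ) : ℝ) := by exact_mod_cast (by omega : 0 < p - 1)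
  rw [one_div, hp_cast, Real.le_rpow_inv_iff_of_pos (norm_nonneg c) zero_le_two hp_pos,
    Real.rpow_natCast]
  by_contra! hc
  have hc0 : 0 < ‖c‖ := (norm_nonneg c).lt_of_ne' fun h => by
    rw [h, zero_pow (by omega)] at hc
    linarith
  obtain ⟨n, hn⟩ := pow_unbounded_of_one_lt (M / ‖c‖) (by linarith : 1 < ‖c‖ ^ (p - 1) - 1)
  rw [div_lt_iff₀ hc0] at hn
  linarith [hM n, pow_mul_norm_le_norm_iterate (by omega) hc.le n]

def bcEval (s : ℂ) : ℂ × ℂ →ₗ[ℂ] ℂ where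
  toFun z := z.1 + s * z.2
  map_add' z w := by simp only [Prod.fst_add, Prod.snd_add]; ring
  map_smul' a z := by simp only [Prod.smul_fst, Prod.smul_snd, smul_eq_mul, RingHom.id_apply]; ring

def tcEval (e : ℂ × ℂ) : (ℂ × ℂ) × (ℂ × ℂ) →ₗ[ℂ] ℂ × ℂ where
  toFun η := η.1 + bcMul η.2 e
  map_add' η θ := by ext <;> simp only [bcMul, Prod.fst_add, Prod.snd_add] <;> ring
  map_smul' a η := by
    ext <;> simp only [bcMul, Prod.smul_fst, Prod.smul_snd, Prod.fst_add, Prod.snd_add,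
      smul_eq_mul, RingHom.id_apply] <;> ring

variable {s : ℂ} {e : ℂ × ℂ}

lemma bcEval_bcMul (hs : s * s = -1) (z w : ℂ × ℂ) :
    bcEval s (bcMul z w) = bcEval s z * bcEval s w := by
  simp only [bcEval, bcMul, LinearMap.coe_mk, AddHom.coe_mk]
  linear_combination (-(z.2 * w.2)) * hs

lemma tcEval_tcMul (he : bcMul e e = (-1, 0)) (η θ : (ℂ × ℂ) × (ℂ × ℂ)) :
    tcEval e (tcMul η θ) = bcMul (tcEval e η) (tcEval e θ) := by
  obtain ⟨he₁, he₂⟩ := Prod.ext_iff.mp he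
  simp only [bcMul] at he₁ he₂
  simp only [tcEval, tcMul, bcMul, LinearMap.coe_mk, AddHom.coe_mk]
  ext <;> simp only [Prod.fst_add, Prod.snd_add, Prod.fst_sub, Prod.snd_sub]
  · linear_combination (-(η.2.1 * θ.2.1 - η.2.2 * θ.2.2)) * he₁
      + (η.2.1 * θ.2.2 + η.2.2 * θ.2.1) * he₂
  · linear_combination (-(η.2.1 * θ.2.2 + η.2.2 * θ.2.1)) * he₁
      - (η.2.1 * θ.2.1 - η.2.2 * θ.2.2) * he₂

lemma bcEval_tcEval_tcPow (hs : s * s = -1) (he : bcMul e e = (-1, 0))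
    (η : (ℂ × ℂ) × (ℂ × ℂ)) (n : ℕ) :
    bcEval s (tcEval e (tcPow η n)) = bcEval s (tcEval e η) ^ n := by
  induction n with
  | zero => simp [tcPow, bcEval, tcEval, bcMul]
  | succ n ih => rw [tcPow, tcEval_tcMul he, bcEval_bcMul hs, ih, pow_succ]

lemma bcEval_tcEval_iterate_tcQ (hs : s * s = -1) (he : bcMul e e = (-1, 0))
    (p : ℕ) (c : (ℂ × ℂ) × (ℂ × ℂ)) (m : ℕ) :
    bcEval s (tcEval e ((tcQ p c)^[m] ((0, 0), (0, 0)))) =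
      (fun z : ℂ => z ^ p + bcEval s (tcEval e c))^[m] 0 := by
  have semiconj : Function.Semiconj (fun η => bcEval s (tcEval e η)) (tcQ p c)
      (fun z : ℂ => z ^ p + bcEval s (tcEval e c)) := fun η => by
    simp only [tcQ, map_add, bcEval_tcEval_tcPow hs he]
  have at_zero : bcEval s (tcEval e ((0, 0), (0, 0))) = 0 := by simp [bcEval, tcEval, bcMul]
  exact (semiconj.iterate_right m _).trans (congrArg _ at_zero)

-- `‖η‖` is Mathlib's sup norm on the product, not the Euclidean `tcNorm`.
lemma norm_le_tcNorm (η : (ℂ × ℂ) × (ℂ × ℂ)) : ‖η‖ ≤ tcNorm η := by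
  have fst_le (z : ℂ × ℂ) : ‖z.1‖ ≤ bcNorm z :=
    Real.le_sqrt_of_sq_le (le_add_of_nonneg_right (sq_nonneg _))
  have snd_le (z : ℂ × ℂ) : ‖z.2‖ ≤ bcNorm z :=
    Real.le_sqrt_of_sq_le (le_add_of_nonneg_left (sq_nonneg _))
  have fst_le' : bcNorm η.1 ≤ tcNorm η :=
    Real.le_sqrt_of_sq_le (le_add_of_nonneg_right (sq_nonneg _))
  have snd_le' : bcNorm η.2 ≤ tcNorm η :=
    Real.le_sqrt_of_sq_le (le_add_of_nonneg_left (sq_nonneg _))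
  simp only [Prod.norm_def, max_le_iff]
  exact ⟨⟨(fst_le _).trans fst_le', (snd_le _).trans fst_le'⟩,
    ⟨(fst_le _).trans snd_le', (snd_le _).trans snd_le'⟩⟩

lemma norm_apply_le_opNorm_mul_tcNorm (L : (ℂ × ℂ) × (ℂ × ℂ) →ₗ[ℂ] ℂ)
    (η : (ℂ × ℂ) × (ℂ × ℂ)) : ‖L η‖ ≤ ‖LinearMap.toContinuousLinearMap L‖ * tcNorm η :=
  ((LinearMap.toContinuousLinearMap L).le_opNorm η).trans
    (mul_le_mul_of_nonneg_left (norm_le_tcNorm η) (norm_nonneg _))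

lemma norm_bcEval_tcEval_le_of_mem_M3 {p : ℕ} (hp : 2 ≤ p) (hs : s * s = -1)
    (he : bcMul e e = (-1, 0)) {c : (ℂ × ℂ) × (ℂ × ℂ)} (hc : c ∈ M3 p) :
    ‖bcEval s (tcEval e c)‖ ≤ 2 ^ (1 / ((p : ℝ) - 1)) := by
  obtain ⟨M, hM⟩ := hc
  set L := (bcEval s).comp (tcEval e)
  refine norm_le_of_forall_norm_iterate_le hp (M := ‖LinearMap.toContinuousLinearMap L‖ * M)
    fun m => ?_
  rw [← bcEval_tcEval_iterate_tcQ hs he]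
  exact (norm_apply_le_opNorm_mul_tcNorm L _).trans
    (mul_le_mul_of_nonneg_left (hM (m + 1) (by omega)) (norm_nonneg _))

lemma bcNorm_le_of_norm_bcEval_le {z : ℂ × ℂ} {r : ℝ} (hI : ‖bcEval I z‖ ≤ r)
    (hnegI : ‖bcEval (-I) z‖ ≤ r) : bcNorm z ≤ r := by
  have parallelogram : bcNorm z ^ 2 = (‖bcEval I z‖ ^ 2 + ‖bcEval (-I) z‖ ^ 2) / 2 := by
    rw [bcNorm, Real.sq_sqrt (by positivity)]
    simp only [bcEval, LinearMap.coe_mk, AddHom.coe_mk, Complex.sq_norm, normSq_apply, add_re,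
      add_im, mul_re, mul_im, neg_re, neg_im, I_re, I_im]
    ring
  have hr : 0 ≤ r := (norm_nonneg _).trans hI
  refine le_of_pow_le_pow_left₀ two_ne_zero hr ?_
  rw [parallelogram]
  nlinarith [pow_le_pow_left₀ (norm_nonneg _) hI 2, pow_le_pow_left₀ (norm_nonneg _) hnegI 2]

theorem tricomplex_multibrot_subset_discus (p : ℕ) (hp : 2 ≤ p)
    (r : ℝ) (hr : r = (2 : ℝ) ^ ((1 : ℝ) / ((p : ℝ) - 1))) :
    M3 p ⊆ {z : (ℂ × ℂ) × (ℂ × ℂ) |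
      bcNorm (z.1 - bcMul z.2 i2) ≤ r ∧ bcNorm (z.1 + bcMul z.2 i2) ≤ r} := by
  intro c hc
  have hI : I * I = -1 := I_mul_I
  have hnegI : -I * -I = -1 := by rw [neg_mul_neg, I_mul_I]
  have hi2 : bcMul i2 i2 = (-1, 0) := by simp [bcMul, i2]
  have hnegi2 : bcMul (-i2) (-i2) = (-1, 0) := by simp [bcMul, i2]
  have tcEval_neg_i2 : tcEval (-i2) c = c.1 - bcMul c.2 i2 := by
    ext <;> simp [tcEval, bcMul, i2, sub_eq_add_neg]
  subst hr
  refine ⟨?_, ?_⟩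
  · rw [← tcEval_neg_i2]
    exact bcNorm_le_of_norm_bcEval_le (norm_bcEval_tcEval_le_of_mem_M3 hp hI hnegi2 hc)
      (norm_bcEval_tcEval_le_of_mem_M3 hp hnegI hnegi2 hc)
  · exact bcNorm_le_of_norm_bcEval_le (norm_bcEval_tcEval_le_of_mem_M3 hp hI hi2 hc)
      (norm_bcEval_tcEval_le_of_mem_M3 hp hnegI hi2 hc)
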